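/- Let p be prime, n ≥ 1, and 0 < b' < p^n − 1 with gcd(b', p) = 1. Set d(s) = 1 + ⌊(b'·s − 1)/p^n⌋ and w(s) = min{d(u) − d(u−s) : u ∈ {0,...,p^n−1}, s ⪯ u}. Then there exists s with 0 < s < p^n − 1 such that w(s) < d(s). (Hence the inverse different ideal is not free over its associated order unless b' = p^n − 1.) -/

import Mathlib

/-- The `i`-th base-`p` digit of `s`. -/
def dig (p s i : ℕ) : ℕ := s / p ^ i % p

/-- Digitwise partial order on base-`p` expansions: `s ⪯ t`. -/
def preceq (p s t : ℕ) : Prop := ∀ i, dig p s i ≤ dig p t i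

/-- Inverse-different case: `d(s) = 1 + ⌊(b'·s − 1)/p^n⌋`. -/
def dfun (p n b' : ℕ) (s : ℕ) : ℤ := 1 + Int.fdiv ((b' : ℤ) * s - 1) ((p : ℤ) ^ n)

/-- `w(s) = min { d(u) − d(u−s) : u ∈ {0,…,p^n−1}, s ⪯ u }`. -/
noncomputable def wfun (p n b' : ℕ) (s : ℕ) : ℤ :=
  sInf ((fun u => dfun p n b' u - dfun p n b' (u - s)) ''
    {u : ℕ | u < p ^ n ∧ preceq p s u})

/-!
Take for `s` the inverse of `b'` modulo `p^n`, so that `b' s = p^n q + 1` and `d(s) = 1 + q`.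
Every `s < p^n` satisfies `s ⪯ p^n - 1`, and for `u = p^n - 1` one computes `d(u) = b'` and
`d(u - s) = b' - q`, so `w(s) ≤ q < d(s)`. Finally `s ≠ p^n - 1`, since `b' (p^n - 1) ≡ -b'`
is not `1` modulo `p^n` when `b' + 1 < p^n`.
-/

lemma dig_zero (p i : ℕ) : dig p 0 i = 0 := by
  simp [dig]

lemma dig_pow_sub_one {p n i : ℕ} (hp : 1 < p) (hi : i < n) : dig p (p ^ n - 1) i = p - 1 := by
  have hpi : 0 < p ^ i := Nat.pow_pos (by omega)
  have hpn : 0 < p ^ (n - i - 1) := Nat.pow_pos (by omega)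
  have hsplit : p ^ n - 1 = p ^ i * (p * (p ^ (n - i - 1) - 1) + (p - 1)) + (p ^ i - 1) := by
    have hpow : (p : ℤ) ^ n = p ^ i * (p * p ^ (n - i - 1)) := by
      rw [← pow_succ', ← pow_add]; congr 1; omega
    zify [hpi, hpn, hp.le, Nat.one_le_pow n p (by omega)]
    rw [hpow]; ring
  rw [dig, hsplit, Nat.mul_add_div hpi, Nat.div_eq_of_lt (by omega), Nat.add_zero,
    Nat.mul_add_mod, Nat.mod_eq_of_lt (by omega)]

lemma dig_eq_zero_of_lt_pow {p s i : ℕ} (hs : s < p ^ i) : dig p s i = 0 := by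
  simp [dig, Nat.div_eq_of_lt hs]

lemma preceq_pow_sub_one {p n s : ℕ} (hs : s < p ^ n) : preceq p s (p ^ n - 1) := by
  intro i
  rcases Nat.lt_or_ge 1 p with hp | hp
  · rcases Nat.lt_or_ge i n with hi | hi
    · rw [dig_pow_sub_one hp hi]
      have : dig p s i < p := Nat.mod_lt _ (by omega)
      omega
    · rw [dig_eq_zero_of_lt_pow (hs.trans_le (Nat.pow_le_pow_right (by omega) hi))]
      exact Nat.zero_le _
  · have : p ^ n ≤ 1 := pow_le_one₀ (Nat.zero_le p) hp
    rw [show s = 0 by omega, dig_zero]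
    exact Nat.zero_le _

lemma mul_pred_mod_ne_one {b m : ℕ} (hbm : b + 1 < m) : b * (m - 1) % m ≠ 1 := by
  intro h
  have hzero : (b * (m - 1) + b) % m = 0 := by
    rw [← Nat.mul_add_one, Nat.sub_add_cancel (by omega), Nat.mul_mod_left]
  rw [Nat.add_mod, h, Nat.mod_eq_of_lt (by omega : b < m), Nat.mod_eq_of_lt (by omega)] at hzero
  omega

section

variable {p n b' : ℕ}

lemma dfun_eq_of_le_of_lt {m : ℕ} {k : ℤ} (hP : 0 < (p : ℤ) ^ n)
    (hlo : k * p ^ n ≤ b' * m - 1) (hhi : b' * m - 1 < k * p ^ n + p ^ n) :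
    dfun p n b' m = 1 + k := by
  rw [dfun, Int.fdiv_eq_ediv_of_nonneg _ hP.le, (Int.ediv_eq_iff_of_pos hP).2 ⟨hlo, hhi⟩]

lemma dfun_of_mul_eq {s : ℕ} {q : ℤ} (hP : 0 < (p : ℤ) ^ n) (h : (b' : ℤ) * s = p ^ n * q + 1) :
    dfun p n b' s = 1 + q :=
  dfun_eq_of_le_of_lt hP (by linarith) (by linarith)

lemma dfun_pow_sub_one (hb : b' < p ^ n) : dfun p n b' (p ^ n - 1) = b' := by
  have hP : 0 < (p : ℤ) ^ n := by exact_mod_cast (Nat.zero_le b').trans_lt hb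
  have hbZ : (b' : ℤ) < p ^ n := by exact_mod_cast hb
  have hcast : ((p ^ n - 1 : ℕ) : ℤ) = p ^ n - 1 := by rw [Nat.cast_sub (by omega)]; push_cast; ring
  rw [dfun_eq_of_le_of_lt (k := b' - 1) hP (by rw [hcast]; linarith) (by rw [hcast]; linarith)]
  ring

lemma dfun_pow_sub_one_sub {s : ℕ} {q : ℤ} (hb : b' + 2 ≤ p ^ n) (hs : s < p ^ n)
    (h : (b' : ℤ) * s = p ^ n * q + 1) : dfun p n b' (p ^ n - 1 - s) = b' - q := by
  have hP : 0 < (p : ℤ) ^ n := by exact_mod_cast (Nat.zero_le _).trans_lt hs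
  have hbZ : (b' : ℤ) + 2 ≤ p ^ n := by exact_mod_cast hb
  have hcast : ((p ^ n - 1 - s : ℕ) : ℤ) = p ^ n - 1 - s := by
    rw [Nat.cast_sub (by omega), Nat.cast_sub (by omega)]; push_cast; ring
  rw [dfun_eq_of_le_of_lt (k := b' - q - 1) hP (by rw [hcast]; linarith)
    (by rw [hcast]; linarith)]
  ring

lemma wfun_le {s u : ℕ} (hu : u < p ^ n) (hsu : preceq p s u) :
    wfun p n b' s ≤ dfun p n b' u - dfun p n b' (u - s) := by
  have hfin : {u : ℕ | u < p ^ n ∧ preceq p s u}.Finite :=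
    (Set.finite_Iio (p ^ n)).subset fun _ hu => hu.1
  exact csInf_le (hfin.image _).bddBelow ⟨u, ⟨hu, hsu⟩, rfl⟩

lemma wfun_lt_dfun_of_mul_mod_eq_one {s : ℕ} (hb : b' + 2 ≤ p ^ n) (hs : s < p ^ n)
    (hinv : b' * s % p ^ n = 1) : wfun p n b' s < dfun p n b' s := by
  have hP : 0 < (p : ℤ) ^ n := by exact_mod_cast (Nat.zero_le _).trans_lt hs
  set q := b' * s / p ^ n
  have hq : b' * s = p ^ n * q + 1 := by
    rw [← hinv]; exact (Nat.div_add_mod _ _).symm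
  replace hq : (b' : ℤ) * s = p ^ n * q + 1 := by exact_mod_cast hq
  calc wfun p n b' s
      ≤ dfun p n b' (p ^ n - 1) - dfun p n b' (p ^ n - 1 - s) :=
        wfun_le (by omega) (preceq_pow_sub_one hs)
    _ = q := by rw [dfun_pow_sub_one (by omega), dfun_pow_sub_one_sub hb hs hq]; ring
    _ < dfun p n b' s := by rw [dfun_of_mul_eq hP hq]; omega

end

theorem stmt_8_general (p n : ℕ) (b' : ℕ)
    (hbu : b' < p ^ n - 1) (hcop : Nat.Coprime b' p) :
    ∃ s : ℕ, 0 < s ∧ s < p ^ n - 1 ∧ wfun p n b' s < dfun p n b' s := by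
  obtain ⟨s, hs, hinv⟩ := Nat.exists_mul_mod_eq_one_of_coprime (hcop.pow_right n) (by omega)
  have hs0 : s ≠ 0 := by rintro rfl; simp at hinv
  have hs1 : s ≠ p ^ n - 1 := by rintro rfl; exact mul_pred_mod_ne_one (by omega) hinv
  exact ⟨s, by omega, by omega, wfun_lt_dfun_of_mul_mod_eq_one (by omega) hs hinv⟩

theorem stmt_8 (p n : ℕ) (hp : p.Prime) (hn : 1 ≤ n) (b' : ℕ)
    (hb0 : 0 < b') (hbu : b' < p ^ n - 1) (hcop : Nat.Coprime b' p) :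
    ∃ s : ℕ, 0 < s ∧ s < p ^ n - 1 ∧ wfun p n b' s < dfun p n b' s :=
  stmt_8_general p n b' hbu hcop
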